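/- If W is an irreducible nonnegative square matrix, then there exists an eigenvector p with all entries strictly positive associated to the spectral radius λ₁ of W. -/

import Mathlib

open Matrix

/-- `W` is irreducible: the directed graph with an edge `j → i` whenever `W i j > 0`
is strongly connected, i.e. every ordered pair of vertices is joined by a directed path,
equivalently some power of `W` has a positive `(i, j)` entry. -/
def MatrixIrreducible {n : ℕ} (W : Matrix (Fin n) (Fin n) ℝ) : Prop :=
  ∀ i j : Fin n, ∃ k : ℕ, 0 < k ∧ 0 < (W ^ k) i j

/-- `μ : ℂ` is an eigenvalue of the real matrix `W` (viewed over `ℂ`). -/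
def IsEigOf {n : ℕ} (W : Matrix (Fin n) (Fin n) ℝ) (μ : ℂ) : Prop :=
  Module.End.HasEigenvalue (Matrix.toLin' (W.map (Complex.ofReal))) μ

/-- The spectral radius of `W` : the supremum of the absolute values of its eigenvalues. -/
noncomputable def specRad {n : ℕ} (W : Matrix (Fin n) (Fin n) ℝ) : ℝ :=
  sSup {r : ℝ | ∃ μ : ℂ, IsEigOf W μ ∧ r = ‖μ‖}

/-!
Collatz–Wielandt argument. Maximise `ρ` over the compact set of pairs `(ρ, x)` with `x` in the
standard simplex and `ρ x ≤ W x`, and let `(r, x)` be a maximiser. The matrix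
`B = ∑_{k ≤ N} W ^ k` has positive entries and commutes with `W`; if `W x ≠ r x`, then
`y = B x` and `W y - r y = B (W x - r x)` are entrywise positive, so `(r + ε) y ≤ W y` for some
`ε > 0`, contradicting maximality. Hence `W x = r x`, and irreducibility makes every entry of `x`
positive. Finally, for an
eigenvector `v` of an eigenvalue `μ`, the triangle inequality gives `|μ| |v| ≤ W |v|`, so
`|μ| ≤ r` by maximality: `r` is the spectral radius.
-/

open Filter Topology

lemma exists_pos_add_smul_le {ι : Type*} [Finite ι] {r : ℝ} {y b : ι → ℝ}
    (h : ∀ i, r * y i < b i) : ∃ ε > 0, (r + ε) • y ≤ b := by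
  have hev : ∀ᶠ ε in 𝓝[>] (0 : ℝ), ∀ i, (r + ε) * y i < b i := by
    refine eventually_all.2 fun i => ?_
    have hlim : Tendsto (fun ε => (r + ε) * y i) (𝓝[>] 0) (𝓝 (r * y i)) :=
      (Continuous.tendsto' (by fun_prop) 0 _ (by simp)).mono_left nhdsWithin_le_nhds
    exact hlim.eventually (gt_mem_nhds (h i))
  obtain ⟨ε, hlt, hε⟩ := (hev.and self_mem_nhdsWithin).exists
  exact ⟨ε, hε, fun i => (hlt i).le⟩

lemma pos_of_mem_stdSimplex {ι : Type*} [Fintype ι] {x : ι → ℝ} (hx : x ∈ stdSimplex ℝ ι) :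
    0 < x :=
  lt_of_le_of_ne hx.1 fun h => by simpa [← h] using hx.2

namespace Matrix

variable {ι : Type*} [Fintype ι] {W : Matrix ι ι ℝ} {x : ι → ℝ} {r : ℝ}

lemma mul_le_mulVec_apply (hW : ∀ i j, 0 ≤ W i j) (hx : 0 ≤ x) (i j : ι) :
    W i j * x j ≤ (W *ᵥ x) i :=
  Finset.single_le_sum (f := fun l => W i l * x l) (fun l _ => mul_nonneg (hW i l) (hx l))
    (Finset.mem_univ j)

lemma mulVec_nonneg (hW : ∀ i j, 0 ≤ W i j) (hx : 0 ≤ x) : 0 ≤ W *ᵥ x :=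
  fun i => Finset.sum_nonneg fun j _ => mul_nonneg (hW i j) (hx j)

lemma mulVec_apply_pos (hW : ∀ i j, 0 < W i j) (hx : 0 < x) (i : ι) : 0 < (W *ᵥ x) i := by
  obtain ⟨hx, j, hj⟩ := Pi.lt_def.1 hx
  exact (mul_pos (hW i j) hj).trans_le (mul_le_mulVec_apply (fun i j => (hW i j).le) hx i j)

lemma mulVec_pos (hW : ∀ i j, 0 < W i j) (hx : 0 < x) : 0 < W *ᵥ x := by
  obtain ⟨-, j, -⟩ := Pi.lt_def.1 hx
  exact Pi.lt_def.2 ⟨fun i => (mulVec_apply_pos hW hx i).le, j, mulVec_apply_pos hW hx j⟩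

lemma pow_mulVec_eq_smul [DecidableEq ι] (h : W *ᵥ x = r • x) (k : ℕ) :
    (W ^ k) *ᵥ x = r ^ k • x := by
  induction k with
  | zero => simp
  | succ k ih => rw [pow_succ', ← mulVec_mulVec, ih, mulVec_smul, h, smul_smul, pow_succ]

lemma norm_smul_le_mulVec_norm (hW : ∀ i j, 0 ≤ W i j) {μ : ℂ} {v : ι → ℂ}
    (h : W.map Complex.ofReal *ᵥ v = μ • v) :
    ‖μ‖ • (fun i => ‖v i‖) ≤ W *ᵥ fun i => ‖v i‖ := fun i =>
  calc ‖μ‖ * ‖v i‖ = ‖(W.map Complex.ofReal *ᵥ v) i‖ := by rw [h, Pi.smul_apply, norm_smul]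
    _ ≤ ∑ j, ‖W.map Complex.ofReal i j * v j‖ := norm_sum_le _ _
    _ = (W *ᵥ fun i => ‖v i‖) i := by
      simp [mulVec, dotProduct, abs_of_nonneg (hW _ _)]

def collatzWielandtSet (W : Matrix ι ι ℝ) : Set (ℝ × (ι → ℝ)) :=
  {p | 0 ≤ p.1 ∧ p.2 ∈ stdSimplex ℝ ι ∧ p.1 • p.2 ≤ W *ᵥ p.2}

lemma le_sum_of_smul_le_mulVec (hW : ∀ i j, 0 ≤ W i j) (hx : x ∈ stdSimplex ℝ ι)
    (h : r • x ≤ W *ᵥ x) : r ≤ ∑ i, ∑ j, W i j :=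
  calc r = ∑ i, r * x i := by rw [← Finset.mul_sum, hx.2, mul_one]
    _ ≤ ∑ i, (W *ᵥ x) i := Finset.sum_le_sum fun i _ => h i
    _ ≤ ∑ i, ∑ j, W i j := Finset.sum_le_sum fun i _ => Finset.sum_le_sum fun j _ =>
        mul_le_of_le_one_right (hW i j) (mem_Icc_of_mem_stdSimplex hx j).2

lemma isCompact_collatzWielandtSet (hW : ∀ i j, 0 ≤ W i j) :
    IsCompact (collatzWielandtSet W) := by
  have hclosed : IsClosed (collatzWielandtSet W) :=
    (isClosed_le continuous_const continuous_fst).inter <|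
      ((isClosed_stdSimplex ℝ ι).preimage continuous_snd).inter <|
        isClosed_le (continuous_fst.smul continuous_snd)
          (continuous_const.matrix_mulVec continuous_snd)
  exact (isCompact_Icc.prod (isCompact_stdSimplex ℝ ι)).of_isClosed_subset hclosed
    fun p hp => ⟨⟨hp.1, le_sum_of_smul_le_mulVec hW hp.2.1 hp.2.2⟩, hp.2.1⟩

lemma collatzWielandtSet_nonempty [Nonempty ι] (hW : ∀ i j, 0 ≤ W i j) :
    (collatzWielandtSet W).Nonempty := by
  classical
  have hsingle := single_mem_stdSimplex ℝ (Classical.arbitrary ι)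
  exact ⟨(0, _), le_rfl, hsingle, by rw [zero_smul]; exact mulVec_nonneg hW hsingle.1⟩

lemma inv_sum_smul_mem_collatzWielandtSet (hr : 0 ≤ r) (hx : 0 < x) (h : r • x ≤ W *ᵥ x) :
    (r, (∑ i, x i)⁻¹ • x) ∈ collatzWielandtSet W := by
  obtain ⟨hx, j, hj⟩ := Pi.lt_def.1 hx
  have hsum : 0 < ∑ i, x i :=
    hj.trans_le (Finset.single_le_sum (fun i _ => hx i) (Finset.mem_univ j))
  refine ⟨hr, ⟨fun i => mul_nonneg (inv_nonneg.2 hsum.le) (hx i), ?_⟩, ?_⟩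
  · simp only [Pi.smul_apply, smul_eq_mul, ← Finset.mul_sum, inv_mul_cancel₀ hsum.ne']
  · rw [smul_comm, mulVec_smul]
    exact smul_le_smul_of_nonneg_left h (inv_nonneg.2 hsum.le)

lemma mulVec_eq_smul_of_isMaxOn {B : Matrix ι ι ℝ} (hB : ∀ i j, 0 < B i j)
    (hBW : Commute B W) (hmem : (r, x) ∈ collatzWielandtSet W)
    (hmax : IsMaxOn Prod.fst (collatzWielandtSet W) (r, x)) : W *ᵥ x = r • x := by
  obtain ⟨hr, hx, hrx⟩ := hmem
  by_contra hne
  have hz : 0 < W *ᵥ x - r • x := (sub_nonneg.2 hrx).lt_of_ne (Ne.symm (sub_ne_zero.2 hne))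
  have hWy : W *ᵥ (B *ᵥ x) - r • (B *ᵥ x) = B *ᵥ (W *ᵥ x - r • x) := by
    rw [mulVec_sub, mulVec_mulVec, mulVec_mulVec, hBW.eq, mulVec_smul]
  obtain ⟨ε, hε, hle⟩ := exists_pos_add_smul_le (r := r) (y := B *ᵥ x) (b := W *ᵥ (B *ᵥ x))
    fun i => by simpa [hWy.symm] using mulVec_apply_pos hB hz i
  have : r + ε ≤ r := hmax (inv_sum_smul_mem_collatzWielandtSet (add_nonneg hr hε.le)
    (mulVec_pos hB (pos_of_mem_stdSimplex hx)) hle)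
  linarith

end Matrix

section FinMatrix

variable {n : ℕ} {W : Matrix (Fin n) (Fin n) ℝ} {x : Fin n → ℝ} {r : ℝ}

lemma MatrixIrreducible.exists_sum_pow_pos (hirr : MatrixIrreducible W)
    (hW : ∀ i j, 0 ≤ W i j) :
    ∃ N, ∀ i j, 0 < (∑ k ∈ Finset.range N, W ^ k) i j := by
  choose k _ hk using hirr
  obtain ⟨N, hN⟩ := (Set.finite_range fun p : Fin n × Fin n => k p.1 p.2).bddAbove
  refine ⟨N + 1, fun i j => (hk i j).trans_le ?_⟩
  rw [Matrix.sum_apply]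
  exact Finset.single_le_sum (f := fun m => (W ^ m) i j) (fun m _ => pow_apply_nonneg hW m i j)
    (Finset.mem_range.2 (Nat.lt_succ_of_le (hN ⟨(i, j), rfl⟩)))

lemma MatrixIrreducible.pos_of_mulVec_eq_smul (hirr : MatrixIrreducible W)
    (hW : ∀ i j, 0 ≤ W i j) (hx : 0 < x) (h : W *ᵥ x = r • x) (i : Fin n) : 0 < x i := by
  obtain ⟨hx, j, hj⟩ := Pi.lt_def.1 hx
  obtain ⟨k, -, hk⟩ := hirr i j
  have hpos : 0 < r ^ k * x i :=
    calc 0 < (W ^ k) i j * x j := mul_pos hk hj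
      _ ≤ (W ^ k *ᵥ x) i := mul_le_mulVec_apply (pow_apply_nonneg hW k) hx i j
      _ = r ^ k * x i := by rw [pow_mulVec_eq_smul h, Pi.smul_apply, smul_eq_mul]
  exact (hx i).lt_of_ne fun h0 => by simp [← h0] at hpos

lemma isEigOf_of_mulVec_eq_smul (hx : x ≠ 0) (h : W *ᵥ x = r • x) : IsEigOf W r := by
  refine Module.End.hasEigenvalue_of_hasEigenvector (x := Complex.ofReal ∘ x)
    ⟨Module.End.mem_eigenspace_iff.2 (funext fun i => ?_), ?_⟩
  · exact (RingHom.map_mulVec Complex.ofRealHom W x i).symm.trans (by simp [h])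
  · exact fun h0 => hx (funext fun i => by simpa using congrFun h0 i)

lemma IsEigOf.norm_le_of_isMaxOn (hW : ∀ i j, 0 ≤ W i j) {μ : ℂ} (hμ : IsEigOf W μ)
    {p : ℝ × (Fin n → ℝ)} (hmax : IsMaxOn Prod.fst (collatzWielandtSet W) p) : ‖μ‖ ≤ p.1 := by
  obtain ⟨v, hv, hv0⟩ := hμ.exists_hasEigenvector
  rw [Module.End.mem_eigenspace_iff, toLin'_apply] at hv
  obtain ⟨j, hj⟩ := Function.ne_iff.1 hv0
  have hpos : 0 < fun i => ‖v i‖ := Pi.lt_def.2 ⟨fun i => norm_nonneg _, j, norm_pos_iff.2 hj⟩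
  exact hmax (inv_sum_smul_mem_collatzWielandtSet (norm_nonneg μ) hpos
    (norm_smul_le_mulVec_norm hW hv))

lemma specRad_eq_of_isEigOf_of_forall_norm_le (hr : 0 ≤ r) (heig : IsEigOf W r)
    (hle : ∀ μ, IsEigOf W μ → ‖μ‖ ≤ r) : specRad W = r :=
  IsGreatest.csSup_eq ⟨⟨r, heig, by simp [abs_of_nonneg hr]⟩, by
    rintro _ ⟨μ, hμ, rfl⟩
    exact hle μ hμ⟩

end FinMatrix

/-- **Perron–Frobenius (part 3).** If `W` is an irreducible nonnegative square matrix
(`n ≥ 1`), then there exists an eigenvector `p` with all entries strictly positive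
associated to the spectral radius `λ₁` of `W`. -/
theorem perron_frobenius_exists_positive_eigenvector
    {n : ℕ} (hn : 1 ≤ n) (W : Matrix (Fin n) (Fin n) ℝ)
    (hnonneg : ∀ i j, 0 ≤ W i j) (hirr : MatrixIrreducible W) :
    ∃ p : Fin n → ℝ, (∀ i, 0 < p i) ∧ W.mulVec p = specRad W • p := by
  have : Nonempty (Fin n) := ⟨⟨0, hn⟩⟩
  obtain ⟨⟨r, x⟩, hmem, hmax⟩ := (isCompact_collatzWielandtSet hnonneg).exists_isMaxOn
    (collatzWielandtSet_nonempty hnonneg) continuous_fst.continuousOn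
  obtain ⟨N, hB⟩ := hirr.exists_sum_pow_pos hnonneg
  have hcomm : Commute (∑ k ∈ Finset.range N, W ^ k) W :=
    Commute.sum_left _ _ _ fun k _ => (Commute.refl W).pow_left k
  have heig : W *ᵥ x = r • x := mulVec_eq_smul_of_isMaxOn hB hcomm hmem hmax
  have hx : 0 < x := pos_of_mem_stdSimplex hmem.2.1
  have hspec : specRad W = r := specRad_eq_of_isEigOf_of_forall_norm_le hmem.1
    (isEigOf_of_mulVec_eq_smul hx.ne' heig) fun μ hμ => hμ.norm_le_of_isMaxOn hnonneg hmax
  exact ⟨x, hirr.pos_of_mulVec_eq_smul hnonneg hx heig, by rw [hspec, heig]⟩
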